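/- Let H ∈ ℂ^{N_B × N_U}, let V ∈ ℂ^{N_U × d_s} satisfy Vᴴ V = I_{d_s} with HV of rank d_s, and let V^⊥ ∈ ℂ^{N_U × (N_U−d_s)} satisfy (V^⊥)ᴴ V^⊥ = I, (V^⊥)ᴴ V = 0, and V Vᴴ + V^⊥ (V^⊥)ᴴ = I_{N_U}. Let Π^⊥ := I_{N_B} − HV((HV)ᴴ HV)^{−1}(HV)ᴴ be the orthogonal projection onto the orthogonal complement of the column space of HV, and let Ω := (V^⊥)ᴴ Hᴴ Π^⊥ H V^⊥, a Hermitian positive semidefinite matrix with largest eigenvalue λ_1(Ω). Then for every V̂ ∈ ℂ^{N_U × d_s} with V̂ᴴ V̂ = I_{d_s}: Tr(V̂ᴴ Hᴴ Π^⊥ H V̂) ≤ λ_1(Ω) · (d_s − Tr(V Vᴴ V̂ V̂ᴴ)). -/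

import Mathlib

/-!
Since Π^⊥ annihilates `H V` and `V Vᴴ + V^⊥ V^⊥ᴴ = 1`, the matrix `Hᴴ Π^⊥ H` equals
`V^⊥ Ω V^⊥ᴴ`, so the residual interference is `Tr (Bᴴ Ω B)` with `B = V^⊥ᴴ V̂`.
Bounding `Ω` by `λ₁ • 1` in the Loewner order gives at most `λ₁ Tr (Bᴴ B)`, and
`Tr (Bᴴ B) = Tr (V̂ᴴ (1 - V Vᴴ) V̂)` is the squared chordal distance.
-/

open Matrix
open scoped ComplexOrder

namespace Matrix

variable {m n k l : Type*} [Fintype m] [Fintype n] [Fintype k] [Fintype l]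

theorem isUnit_of_rank_eq_card {K : Type*} [Field K] [DecidableEq n] {A : Matrix n n K}
    (h : A.rank = Fintype.card n) : IsUnit A := by
  refine mulVec_surjective_iff_isUnit.mp fun v => ?_
  have : LinearMap.range A.mulVecLin = ⊤ :=
    Submodule.eq_top_of_finrank_eq (by simpa [rank] using h)
  exact LinearMap.range_eq_top.mp this v

theorem isUnit_det_conjTranspose_mul_self_of_rank_eq {𝕜 : Type*} [RCLike 𝕜] [DecidableEq n]
    {G : Matrix m n 𝕜} (h : G.rank = Fintype.card n) : IsUnit (Gᴴ * G).det :=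
  (isUnit_iff_isUnit_det _).mp <| isUnit_of_rank_eq_card <| (rank_conjTranspose_mul_self G).trans h

section Projection

variable {R : Type*} [CommRing R] [StarRing R] [DecidableEq n] [DecidableEq m]

noncomputable def orthComplProj (G : Matrix m n R) : Matrix m m R := 1 - G * (Gᴴ * G)⁻¹ * Gᴴ

variable {G : Matrix m n R}

theorem orthComplProj_mul_self (hG : IsUnit (Gᴴ * G).det) : orthComplProj G * G = 0 := by
  rw [orthComplProj, Matrix.sub_mul, Matrix.one_mul, Matrix.mul_assoc, Matrix.mul_assoc,
    nonsing_inv_mul _ hG, Matrix.mul_one, sub_self]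

theorem conjTranspose_mul_orthComplProj (hG : IsUnit (Gᴴ * G).det) :
    Gᴴ * orthComplProj G = 0 := by
  rw [orthComplProj, Matrix.mul_sub, Matrix.mul_one, ← Matrix.mul_assoc, ← Matrix.mul_assoc,
    mul_nonsing_inv _ hG, Matrix.one_mul, sub_self]

end Projection

theorem eq_mul_mul_of_add_eq_one {R : Type*} [Semiring R] [DecidableEq n]
    {P : Matrix n n R} {V : Matrix n k R} {W : Matrix k n R} {Vp : Matrix n l R}
    {Wp : Matrix l n R} (h : V * W + Vp * Wp = 1) (hPV : P * V = 0) (hWP : W * P = 0) :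
    P = Vp * (Wp * P * Vp) * Wp := by
  calc P = (V * W + Vp * Wp) * P * (V * W + Vp * Wp) := by rw [h, one_mul, mul_one]
    _ = Vp * (Wp * P * Vp) * Wp := by
      simp only [Matrix.add_mul, Matrix.mul_add, Matrix.mul_assoc, ← Matrix.mul_assoc P V,
        hPV, hWP, Matrix.zero_mul, Matrix.mul_zero, zero_add]

theorem trace_conjTranspose_mul_self_of_add_eq_one {R : Type*} [CommRing R] [StarRing R]
    [DecidableEq n] [DecidableEq k]
    {V : Matrix n m R} {Vp : Matrix n l R} {U : Matrix n k R}
    (h : V * Vᴴ + Vp * Vpᴴ = 1) (hU : Uᴴ * U = 1) :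
    ((Vpᴴ * U)ᴴ * (Vpᴴ * U)).trace = Fintype.card k - (V * Vᴴ * U * Uᴴ).trace := by
  have hVp : Vp * Vpᴴ = 1 - V * Vᴴ := eq_sub_of_add_eq' h
  calc ((Vpᴴ * U)ᴴ * (Vpᴴ * U)).trace = (Uᴴ * (Vp * Vpᴴ) * U).trace := by
        simp only [conjTranspose_mul, conjTranspose_conjTranspose, Matrix.mul_assoc]
    _ = (Uᴴ * U).trace - (V * Vᴴ * U * Uᴴ).trace := by
        rw [hVp, Matrix.mul_sub, Matrix.sub_mul, trace_sub, Matrix.mul_one,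
          trace_mul_cycle Uᴴ, trace_mul_comm (U * Uᴴ), Matrix.mul_assoc (V * Vᴴ)]
    _ = Fintype.card k - (V * Vᴴ * U * Uᴴ).trace := by rw [hU, trace_one]

section Spectral

variable {𝕜 : Type*} [RCLike 𝕜] [DecidableEq n] {A : Matrix n n 𝕜}

theorem IsHermitian.posSemidef_smul_one_sub_of_eigenvalues_le (hA : A.IsHermitian) {c : ℝ}
    (hc : ∀ i, hA.eigenvalues i ≤ c) : (c • (1 : Matrix n n 𝕜) - A).PosSemidef := by
  open scoped MatrixOrder in
  have : A ≤ algebraMap ℝ (Matrix n n 𝕜) c := le_algebraMap_of_spectrum_le (fun x hx => by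
      obtain ⟨i, rfl⟩ := hA.spectrum_real_eq_range_eigenvalues ▸ hx
      exact hc i) hA.isSelfAdjoint
  rwa [Algebra.algebraMap_eq_smul_one] at this

theorem IsHermitian.re_trace_conjTranspose_mul_mul_le (hA : A.IsHermitian) {c : ℝ}
    (hc : ∀ i, hA.eigenvalues i ≤ c) (B : Matrix n m 𝕜) :
    RCLike.re (Bᴴ * A * B).trace ≤ c * RCLike.re (Bᴴ * B).trace := by
  have hpsd := (hA.posSemidef_smul_one_sub_of_eigenvalues_le hc).conjTranspose_mul_mul_same B
  have := (RCLike.nonneg_iff.mp hpsd.trace_nonneg).1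
  rw [Matrix.mul_sub, Matrix.sub_mul, trace_sub, Matrix.mul_smul, Matrix.mul_one, Matrix.smul_mul,
    trace_smul] at this
  simpa [RCLike.smul_re] using this

end Spectral

end Matrix

theorem residual_interference_upper_bound_general (N_B N_U d_s : ℕ)
    (H : Matrix (Fin N_B) (Fin N_U) ℂ)
    (V : Matrix (Fin N_U) (Fin d_s) ℂ)
    (hrank : (H * V).rank = d_s)
    (Vp : Matrix (Fin N_U) (Fin (N_U - d_s)) ℂ)
    (hcomp : V * Vᴴ + Vp * Vpᴴ = 1)
    (Pi : Matrix (Fin N_B) (Fin N_B) ℂ)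
    (hPi : Pi = 1 - H * V * ((H * V)ᴴ * (H * V))⁻¹ * (H * V)ᴴ)
    (Omega : Matrix (Fin (N_U - d_s)) (Fin (N_U - d_s)) ℂ)
    (hOmega : Omega = Vpᴴ * Hᴴ * Pi * H * Vp)
    (hHerm : Omega.IsHermitian)
    (lam : ℝ) (hub : ∀ i, hHerm.eigenvalues i ≤ lam) :
    ∀ Vhat : Matrix (Fin N_U) (Fin d_s) ℂ, Vhatᴴ * Vhat = 1 →
      (Matrix.trace (Vhatᴴ * Hᴴ * Pi * H * Vhat)).re ≤
        lam * ((d_s : ℝ) - (Matrix.trace (V * Vᴴ * Vhat * Vhatᴴ)).re) := by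
  intro Vhat hVhat
  have hG : IsUnit ((H * V)ᴴ * (H * V)).det :=
    isUnit_det_conjTranspose_mul_self_of_rank_eq (by rw [hrank, Fintype.card_fin])
  have hPiG : Pi * (H * V) = 0 := hPi ▸ orthComplProj_mul_self hG
  have hGPi : (H * V)ᴴ * Pi = 0 := hPi ▸ conjTranspose_mul_orthComplProj hG
  have hcompress : Hᴴ * Pi * H = Vp * Omega * Vpᴴ := by
    refine (eq_mul_mul_of_add_eq_one hcomp ?_ ?_).trans ?_
    · rw [Matrix.mul_assoc _ H V, Matrix.mul_assoc, hPiG, Matrix.mul_zero]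
    · rw [← Matrix.mul_assoc, ← Matrix.mul_assoc, ← conjTranspose_mul, hGPi, Matrix.zero_mul]
    · simp only [hOmega, Matrix.mul_assoc]
  calc (Vhatᴴ * Hᴴ * Pi * H * Vhat).trace.re
      = (Vhatᴴ * (Hᴴ * Pi * H) * Vhat).trace.re := by simp only [Matrix.mul_assoc]
    _ = ((Vpᴴ * Vhat)ᴴ * Omega * (Vpᴴ * Vhat)).trace.re := by
        rw [hcompress]
        simp only [conjTranspose_mul, conjTranspose_conjTranspose, Matrix.mul_assoc]
    _ ≤ lam * ((Vpᴴ * Vhat)ᴴ * (Vpᴴ * Vhat)).trace.re :=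
        hHerm.re_trace_conjTranspose_mul_mul_le hub _
    _ = lam * ((d_s : ℝ) - (V * Vᴴ * Vhat * Vhatᴴ).trace.re) := by
        rw [trace_conjTranspose_mul_self_of_add_eq_one hcomp hVhat]
        simp

/-- Deterministic core of Proposition 3: the residual interference leaking past the
zero-forcing projection Π^⊥ (onto the orthogonal complement of the column space of H V)
is bounded by λ₁(Ω) times the squared chordal distance d_s − Tr(V Vᴴ V̂ V̂ᴴ). -/
theorem residual_interference_upper_bound (N_B N_U d_s : ℕ)
    (H : Matrix (Fin N_B) (Fin N_U) ℂ)
    (V : Matrix (Fin N_U) (Fin d_s) ℂ) (hV : Vᴴ * V = 1)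
    (hrank : (H * V).rank = d_s)
    (Vp : Matrix (Fin N_U) (Fin (N_U - d_s)) ℂ)
    (hVp : Vpᴴ * Vp = 1) (hVpV : Vpᴴ * V = 0)
    (hcomp : V * Vᴴ + Vp * Vpᴴ = 1)
    (Pi : Matrix (Fin N_B) (Fin N_B) ℂ)
    (hPi : Pi = 1 - H * V * ((H * V)ᴴ * (H * V))⁻¹ * (H * V)ᴴ)
    (Omega : Matrix (Fin (N_U - d_s)) (Fin (N_U - d_s)) ℂ)
    (hOmega : Omega = Vpᴴ * Hᴴ * Pi * H * Vp)
    (hHerm : Omega.IsHermitian) (hpsd : Omega.PosSemidef)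
    (lam : ℝ) (hub : ∀ i, hHerm.eigenvalues i ≤ lam)
    (hmem : ∃ i, hHerm.eigenvalues i = lam) :
    ∀ Vhat : Matrix (Fin N_U) (Fin d_s) ℂ, Vhatᴴ * Vhat = 1 →
      (Matrix.trace (Vhatᴴ * Hᴴ * Pi * H * Vhat)).re ≤
        lam * ((d_s : ℝ) - (Matrix.trace (V * Vᴴ * Vhat * Vhatᴴ)).re) :=
  residual_interference_upper_bound_general N_B N_U d_s H V hrank Vp hcomp Pi hPi Omega hOmega hHerm
    lam hub
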